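/- Let g be a finite-dimensional nilpotent real Lie algebra with an integrable complex structure I, and let η be a closed semipositive Hermitian form on (g, I) whose null-space N(η) is a holomorphic Lie subalgebra. Then for every x ∈ N(η) and every y ∈ g one has η([y, x], I[y, x]) = -η([x, [x, y]], Iy), i.e. η([y,x], I[y,x]) = -η(ad_x²(y), Iy). -/

import Mathlib

/-!
Semipositivity (Cauchy–Schwarz for the symmetric form `η a (I b)`) puts `N(η)` inside the
radical `ker η`, and closedness then makes `ad_x` self-adjoint for `η` whenever `x ∈ ker η`,
and makes `ker η` closed under brackets. By integrability, the holomorphic element attached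
to `x ∈ N(η)` and `y` is `2 • (⁅y, x⁆ + I ⁅I y, x⁆)`; applying `I`, `I ⁅y, x⁆ ≡ ⁅I y, x⁆` modulo
`ker η`. Moving `ad_x` across `η` and replacing `I ⁅y, x⁆` by `⁅I y, x⁆` gives the identity.
-/

namespace LinearMap

section ComplexStructure

variable {R M : Type*} [CommRing R] [AddCommGroup M] [Module R M]
  {η : M →ₗ[R] M →ₗ[R] R} {I : M →ₗ[R] M}

theorem apply_map_comm (hI : ∀ x, I (I x) = -x) (halt : η.IsAlt)
    (hinv : ∀ x y, η (I x) (I y) = η x y) (a b : M) : η a (I b) = η b (I a) := by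
  rw [← hinv b (I a), hI, map_neg, halt.neg]

theorem map_mem_ker (hI : ∀ x, I (I x) = -x) (hinv : ∀ x y, η (I x) (I y) = η x y) {a : M}
    (ha : a ∈ ker η) : I a ∈ ker η := by
  refine mem_ker.2 (ext fun b => ?_)
  rw [← neg_neg b, ← hI b, map_neg, hinv, mem_ker.1 ha, zero_apply, zero_apply, neg_zero]

end ComplexStructure

section Semipositive

variable {K M : Type*} [Field K] [LinearOrder K] [IsStrictOrderedRing K]
  [AddCommGroup M] [Module K M]

theorem apply_eq_zero_of_apply_self_eq_zero {B : M →ₗ[K] M →ₗ[K] K}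
    (hsymm : ∀ a b, B a b = B b a) (hpos : ∀ a, 0 ≤ B a a) {a : M} (ha : B a a = 0) (b : M) :
    B a b = 0 := by
  have hquad : ∀ t : K, 0 ≤ 0 * (t * t) + 2 * B a b * t + B b b := fun t => by
    have h := hpos (b + t • a)
    simp only [map_add, map_smul, add_apply, smul_apply, smul_eq_mul, ha, hsymm b a] at h
    linarith
  have hdiscr := discrim_le_zero hquad
  rw [discrim] at hdiscr
  nlinarith [sq_nonneg (B a b)]

variable {η : M →ₗ[K] M →ₗ[K] K} {I : M →ₗ[K] M}

theorem mem_ker_of_apply_map_self_eq_zero (hI : ∀ x, I (I x) = -x) (halt : η.IsAlt)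
    (hinv : ∀ x y, η (I x) (I y) = η x y) (hpos : ∀ x, 0 ≤ η x (I x)) {a : M}
    (ha : η a (I a) = 0) : a ∈ ker η := by
  refine mem_ker.2 (ext fun b => ?_)
  have h := apply_eq_zero_of_apply_self_eq_zero (B := η.compl₂ I)
    (apply_map_comm hI halt hinv) hpos ha (I b)
  simpa [hI] using h

end Semipositive

section Closed

variable {R L : Type*} [CommRing R] [LieRing L] [LieAlgebra R L] {η : L →ₗ[R] L →ₗ[R] R}

theorem apply_lie_comm_of_mem_ker (halt : η.IsAlt)
    (hclosed : ∀ x y z : L, η ⁅x, y⁆ z + η ⁅y, z⁆ x + η ⁅z, x⁆ y = 0) {x : L} (hx : x ∈ ker η)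
    (u v : L) : η ⁅x, u⁆ v = η ⁅x, v⁆ u := by
  have h := hclosed x u v
  rw [← halt.neg x, mem_ker.1 hx, ← lie_skew v x, map_neg] at h
  simp only [zero_apply, neg_zero, add_zero, LinearMap.neg_apply] at h
  linear_combination h

theorem lie_mem_ker (halt : η.IsAlt)
    (hclosed : ∀ x y z : L, η ⁅x, y⁆ z + η ⁅y, z⁆ x + η ⁅z, x⁆ y = 0) {x n : L}
    (hx : x ∈ ker η) (hn : n ∈ ker η) : ⁅x, n⁆ ∈ ker η := by
  refine mem_ker.2 (ext fun c => ?_)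
  rw [apply_lie_comm_of_mem_ker halt hclosed hx, ← halt.neg, mem_ker.1 hn]
  simp

end Closed

end LinearMap

open LinearMap in
theorem eta_bracket_eq_neg_ad_sq_general
    (g : Type*) [LieRing g] [LieAlgebra ℝ g]
    (I : g →ₗ[ℝ] g) (hI : ∀ x, I (I x) = -x)
    (hint : ∀ x y : g, ⁅I x, I y⁆ = ⁅x, y⁆ + I ⁅I x, y⁆ + I ⁅x, I y⁆)
    (η : g →ₗ[ℝ] g →ₗ[ℝ] ℝ) (halt : ∀ x, η x x = 0)
    (hinv : ∀ x y, η (I x) (I y) = η x y)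
    (hpos : ∀ x, 0 ≤ η x (I x))
    (hclosed : ∀ x y z : g, η ⁅x, y⁆ z + η ⁅y, z⁆ x + η ⁅z, x⁆ y = 0)
    (N : Set g) (hN : N = {x : g | η x (I x) = 0})
    -- `N(η)` is `I`-invariant and holomorphic:
    (hNhol : ∀ x ∈ N, ∀ y : g,
      ⁅y, x⁆ + ⁅I y, I x⁆ + I ⁅I y, x⁆ - I ⁅y, I x⁆ ∈ N) :
    ∀ x ∈ N, ∀ y : g, η ⁅y, x⁆ (I ⁅y, x⁆) = -η ⁅x, ⁅x, y⁆⁆ (I y) := by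
  subst hN
  intro x hx y
  have hker : ∀ {a}, η a (I a) = 0 → a ∈ ker η :=
    mem_ker_of_apply_map_self_eq_zero hI halt hinv hpos
  have hadj := apply_lie_comm_of_mem_ker halt hclosed (hker hx)
  have hv : ⁅y, x⁆ + I ⁅I y, x⁆ ∈ ker η := by
    have hw := hNhol x hx y
    rw [hint y x, show ⁅y, x⁆ + (⁅y, x⁆ + I ⁅I y, x⁆ + I ⁅y, I x⁆) + I ⁅I y, x⁆ - I ⁅y, I x⁆
      = (2 : ℝ) • (⁅y, x⁆ + I ⁅I y, x⁆) by module] at hw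
    change η _ (I _) = 0 at hw
    simp only [map_smul, LinearMap.smul_apply, smul_eq_mul] at hw
    exact hker (by linarith)
  have hshift : η ⁅x, I ⁅y, x⁆⁆ = η ⁅x, ⁅I y, x⁆⁆ := by
    have hIv : I ⁅y, x⁆ - ⁅I y, x⁆ ∈ ker η := by
      simpa [hI, sub_eq_add_neg] using map_mem_ker hI hinv hv
    have h := lie_mem_ker halt hclosed (hker hx) hIv
    rwa [lie_sub, mem_ker, map_sub, sub_eq_zero] at h
  calc η ⁅y, x⁆ (I ⁅y, x⁆)
      = -η ⁅x, I ⁅y, x⁆⁆ y := by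
        rw [← hadj y, ← LinearMap.neg_apply, ← map_neg, lie_skew]
    _ = η ⁅x, ⁅x, I y⁆⁆ y := by
        rw [hshift, ← lie_skew (I y) x, lie_neg, map_neg, LinearMap.neg_apply, neg_neg]
    _ = -η ⁅x, ⁅x, y⁆⁆ (I y) := by rw [hadj, hadj ⁅x, y⁆, ← IsAlt.neg halt]

theorem eta_bracket_eq_neg_ad_sq
    (g : Type*) [LieRing g] [LieAlgebra ℝ g] [FiniteDimensional ℝ g]
    [LieRing.IsNilpotent g]
    (I : g →ₗ[ℝ] g) (hI : ∀ x, I (I x) = -x)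
    (hint : ∀ x y : g, ⁅I x, I y⁆ = ⁅x, y⁆ + I ⁅I x, y⁆ + I ⁅x, I y⁆)
    (η : g →ₗ[ℝ] g →ₗ[ℝ] ℝ) (halt : ∀ x, η x x = 0)
    (hinv : ∀ x y, η (I x) (I y) = η x y)
    (hpos : ∀ x, 0 ≤ η x (I x))
    (hclosed : ∀ x y z : g, η ⁅x, y⁆ z + η ⁅y, z⁆ x + η ⁅z, x⁆ y = 0)
    (N : Set g) (hN : N = {x : g | η x (I x) = 0})
    -- `N(η)` is a Lie subalgebra:
    (hNadd : ∀ x ∈ N, ∀ y ∈ N, x + y ∈ N)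
    (hNsmul : ∀ (c : ℝ), ∀ x ∈ N, c • x ∈ N)
    (hNbra : ∀ x ∈ N, ∀ y ∈ N, ⁅x, y⁆ ∈ N)
    -- `N(η)` is `I`-invariant and holomorphic:
    (hNI : ∀ x ∈ N, I x ∈ N)
    (hNhol : ∀ x ∈ N, ∀ y : g,
      ⁅y, x⁆ + ⁅I y, I x⁆ + I ⁅I y, x⁆ - I ⁅y, I x⁆ ∈ N) :
    ∀ x ∈ N, ∀ y : g, η ⁅y, x⁆ (I ⁅y, x⁆) = -η ⁅x, ⁅x, y⁆⁆ (I y) :=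
  eta_bracket_eq_neg_ad_sq_general g I hI hint η halt hinv hpos hclosed N hN hNhol
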